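/- arXiv:1410.7617 — 4 statements merged into one kernel-verified Lean document; each statement's English description precedes it below -/
import Mathlib

section
/- Fix Δξ > 0, Δt > 0, and J ∈ ℤ, set ξ_j = (j − J)Δξ for j ∈ ℤ (so ξ_J = 0) and ξ_{j+1/2} = ξ_j + Δξ/2, and let g : ℤ → ℝ be finitely supported. Define the classical upwind flux F_{j+1/2} := ξ_{j+1/2} g_j for j ≥ J and F_{j+1/2} := ξ_{j+1/2} g_{j+1} for j ≤ J − 1, and one step of the scheme g'_j := g_j − (Δt/Δξ) ( F_{j+1/2} − F_{j−1/2} ). Then the discrete momentum evolves according to Δξ Σ_j ξ_j g'_j = (1 + Δt) Δξ Σ_j ξ_j g_j + (Δt Δξ / 2) [ Δξ Σ_{j ≥ J} g_j − Δξ Σ_{j ≤ J} g_j ]. -/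
/-- Evolution of the discrete momentum under the classical upwind scheme for the
anti-drift equation `∂_t g + ∂_ξ(ξ g) = 0` on the grid `ξ_j = (j − J)Δξ`:
`Δξ Σ ξ_j g'_j = (1 + Δt) Δξ Σ ξ_j g_j + (ΔtΔξ/2)[Δξ Σ_{j≥J} g_j − Δξ Σ_{j≤J} g_j]`. -/
theorem upwind_discrete_momentum_evolution
    (Δξ Δt : ℝ) (hΔξ : 0 < Δξ) (hΔt : 0 < Δt) (J : ℤ)
    (g : ℤ → ℝ) (hg : (Function.support g).Finite)
    (ξ : ℤ → ℝ) (hξ : ∀ j, ξ j = (j - J : ℤ) * Δξ)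
    (F : ℤ → ℝ)
    (hF : ∀ j, F j = if J ≤ j then (ξ j + Δξ / 2) * g j else (ξ j + Δξ / 2) * g (j + 1))
    (g' : ℤ → ℝ) (hg' : ∀ j, g' j = g j - Δt / Δξ * (F j - F (j - 1))) :
    Δξ * ∑' j : ℤ, ξ j * g' j
      = (1 + Δt) * (Δξ * ∑' j : ℤ, ξ j * g j)
        + Δt * Δξ / 2 *
          (Δξ * (∑' j : ℤ, if J ≤ j then g j else 0)
            - Δξ * (∑' j : ℤ, if j ≤ J then g j else 0)) := by
  classical
  have hΔξ' : (Δξ : ℝ) ≠ 0 := hΔξ.ne'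
  have hξ0 : ξ J = 0 := by rw [hξ]; simp
  have hξstep : ∀ j : ℤ, ξ (j + 1) = ξ j + Δξ := by
    intro j; rw [hξ, hξ]; push_cast; ring
  set T : Finset ℤ :=
    hg.toFinset ∪ hg.toFinset.image (· + 1) ∪ hg.toFinset.image (· - 1) with hTdef
  have h0 : ∀ j ∉ T, g j = 0 := by
    intro j hj; by_contra h
    exact hj <| by
      simp only [hTdef, Finset.mem_union]
      exact Or.inl (Or.inl (by simpa [Set.Finite.mem_toFinset] using h))
  have hp : ∀ j ∉ T, g (j + 1) = 0 := by
    intro j hj; by_contra h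
    refine hj ?_
    simp only [hTdef, Finset.mem_union, Finset.mem_image]
    exact Or.inr ⟨j + 1, by simpa [Set.Finite.mem_toFinset] using h, by ring⟩
  have hm : ∀ j ∉ T, g (j - 1) = 0 := by
    intro j hj; by_contra h
    refine hj ?_
    simp only [hTdef, Finset.mem_union, Finset.mem_image]
    exact Or.inl (Or.inr ⟨j - 1, by simpa [Set.Finite.mem_toFinset] using h, by ring⟩)
  have hF0 : ∀ j ∉ T, F j = 0 := by
    intro j hj; rw [hF]
    rcases le_or_gt J j with h | h
    · simp [h, h0 j hj]
    · simp [not_le.mpr h, h.not_ge, hp j hj]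
  have hFm0 : ∀ j ∉ T, F (j - 1) = 0 := by
    intro j hj; rw [hF]
    rcases le_or_gt J (j - 1) with h | h
    · simp [h, hm j hj]
    · simp [not_le.mpr h, h.not_ge, show j - 1 + 1 = j by ring, h0 j hj]
  -- named auxiliary functions
  have sm : ∀ f : ℤ → ℝ, (∀ j ∉ T, f j = 0) → Summable f :=
    fun f h => summable_of_ne_finset_zero h
  have sξg : Summable (fun j => ξ j * g j) := sm _ fun j hj => by rw [h0 j hj]; ring
  have sF : Summable F := sm _ hF0
  have sA : Summable (fun j => if J ≤ j then (ξ j + Δξ / 2) * g j else 0) :=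
    sm _ fun j hj => by rw [h0 j hj]; simp
  have sC : Summable (fun j => if j ≤ J then (ξ j - Δξ / 2) * g j else 0) :=
    sm _ fun j hj => by rw [h0 j hj]; simp
  have sIA : Summable (fun j : ℤ => if J ≤ j then g j else 0) :=
    sm _ fun j hj => by rw [h0 j hj]; simp
  have sIB : Summable (fun j : ℤ => if j ≤ J then g j else 0) :=
    sm _ fun j hj => by rw [h0 j hj]; simp
  have sB : Summable (fun j => if J ≤ j then (0:ℝ) else (ξ j + Δξ / 2) * g (j + 1)) :=
    sm _ fun j hj => by rw [hp j hj]; simp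
  have sE : Summable (fun j => Δt / Δξ * (ξ (j + 1) * F j)) :=
    sm _ fun j hj => by rw [hF0 j hj]; ring
  have sD : Summable (fun j => Δt / Δξ * (ξ j * F (j - 1))) :=
    sm _ fun j hj => by rw [hFm0 j hj]; ring
  have sK : Summable (fun j => ξ j * g j + Δt * F j - Δt / Δξ * (ξ (j + 1) * F j)) :=
    (sξg.add (sF.mul_left Δt)).sub sE
  -- Step 1 : ∑ ξ g' = ∑ (ξ g + Δt F)
  have step1 : ∑' j : ℤ, ξ j * g' j = ∑' j : ℤ, (ξ j * g j + Δt * F j) := by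
    have e1 : ∀ j : ℤ, ξ j * g' j =
        (ξ j * g j + Δt * F j - Δt / Δξ * (ξ (j + 1) * F j))
          + Δt / Δξ * (ξ j * F (j - 1)) := by
      intro j
      rw [hg' j, hξstep j]
      field_simp
      ring
    calc ∑' j : ℤ, ξ j * g' j
        = ∑' j : ℤ, ((ξ j * g j + Δt * F j - Δt / Δξ * (ξ (j + 1) * F j))
            + Δt / Δξ * (ξ j * F (j - 1))) := by exact tsum_congr e1
      _ = (∑' j : ℤ, (ξ j * g j + Δt * F j - Δt / Δξ * (ξ (j + 1) * F j)))
            + ∑' j : ℤ, Δt / Δξ * (ξ j * F (j - 1)) := Summable.tsum_add sK sD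
      _ = (∑' j : ℤ, (ξ j * g j + Δt * F j - Δt / Δξ * (ξ (j + 1) * F j)))
            + ∑' j : ℤ, Δt / Δξ * (ξ (j + 1) * F j) := by
          congr 1
          rw [← (Equiv.addRight (1:ℤ)).tsum_eq (fun j => Δt / Δξ * (ξ j * F (j - 1)))]
          exact tsum_congr fun j => by simp
      _ = ∑' j : ℤ, (ξ j * g j + Δt * F j) := by
          rw [← Summable.tsum_add sK sE]
          exact tsum_congr fun j => by ring
  -- Step 2 : decompose F and shift the lower part
  have hFdec : ∀ j, F j = (if J ≤ j then (ξ j + Δξ / 2) * g j else 0)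
      + (if J ≤ j then (0:ℝ) else (ξ j + Δξ / 2) * g (j + 1)) := by
    intro j; rw [hF]; by_cases h : J ≤ j <;> simp [h]
  have shiftB : (∑' j : ℤ, if J ≤ j then (0:ℝ) else (ξ j + Δξ / 2) * g (j + 1))
      = ∑' j : ℤ, if j ≤ J then (ξ j - Δξ / 2) * g j else 0 := by
    rw [← (Equiv.subRight (1:ℤ)).tsum_eq
      (fun j => if J ≤ j then (0:ℝ) else (ξ j + Δξ / 2) * g (j + 1))]
    refine tsum_congr fun j => ?_
    simp only [Equiv.subRight_apply]
    have hx : ξ (j - 1) + Δξ / 2 = ξ j - Δξ / 2 := by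
      rw [hξ, hξ]; push_cast; ring
    by_cases h : j ≤ J
    · rw [if_pos h, if_neg (by omega), show j - 1 + 1 = j by ring, hx]
    · rw [if_neg h, if_pos (by omega)]
  have stepF : ∑' j : ℤ, F j = (∑' j : ℤ, if J ≤ j then (ξ j + Δξ / 2) * g j else 0)
      + ∑' j : ℤ, if j ≤ J then (ξ j - Δξ / 2) * g j else 0 := by
    rw [tsum_congr hFdec, Summable.tsum_add sA sB, shiftB]
  -- Step 3 : combine pointwise
  have key : (∑' j : ℤ, (ξ j * g j + Δt * F j))
      = (1 + Δt) * (∑' j : ℤ, ξ j * g j)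
        + Δt * Δξ / 2 * ((∑' j : ℤ, if J ≤ j then g j else 0)
          - ∑' j : ℤ, if j ≤ J then g j else 0) := by
    have hsplit : ∑' j : ℤ, (ξ j * g j + Δt * F j)
        = (∑' j : ℤ, ξ j * g j) + Δt * ∑' j : ℤ, F j := by
      rw [Summable.tsum_add sξg (sF.mul_left Δt), tsum_mul_left]
    rw [hsplit, stepF]
    have hAC : (∑' j : ℤ, if J ≤ j then (ξ j + Δξ / 2) * g j else 0)
        + (∑' j : ℤ, if j ≤ J then (ξ j - Δξ / 2) * g j else 0)
        = (∑' j : ℤ, ξ j * g j)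
          + (Δξ / 2 * (∑' j : ℤ, if J ≤ j then g j else 0)
            - Δξ / 2 * (∑' j : ℤ, if j ≤ J then g j else 0)) := by
      rw [← Summable.tsum_add sA sC, ← tsum_mul_left, ← tsum_mul_left,
        ← Summable.tsum_sub (sIA.mul_left (Δξ / 2)) (sIB.mul_left (Δξ / 2)),
        ← Summable.tsum_add sξg ((sIA.mul_left (Δξ / 2)).sub (sIB.mul_left (Δξ / 2)))]
      refine tsum_congr fun j => ?_
      by_cases h1 : J ≤ j <;> by_cases h2 : j ≤ J <;>
        simp only [h1, h2, if_true, if_false]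
      · have hj : j = J := le_antisymm h2 h1
        subst hj; rw [hξ0]; ring
      · ring
      · ring
      · omega
    rw [hAC]; ring
  rw [step1, key]; ring
end

section
/- Fix Δξ > 0, Δt > 0, c ∈ ℝ, θ ∈ [−1,1], and J ∈ ℤ, and set ξ_j = (j−J)Δξ for j ∈ ℤ (so ξ_J = 0). For a finitely supported sequence g : ℤ → ℝ, the momentum conservative upwind (MCU(θ)) flux is F^{(θ)}_{j+1/2} = F^{(0)}_{j+1/2} − (cθΔξ/2)(g_{j+1} − g_j), where F^{(0)}_{j+1/2} = c ξ_j g_j for j ≥ J and c ξ_{j+1} g_{j+1} for j ≤ J−1 when c > 0, and F^{(0)}_{j+1/2} = c ξ_j g_j for j ≤ J−1 and c ξ_{j+1} g_{j+1} for j ≥ J when c < 0. One step of the finite-volume scheme maps g to g' with g'_j = g_j − (Δt/Δξ)(F^{(θ)}_{j+1/2} − F^{(θ)}_{j−1/2}). Let g⁰ : ℤ → ℝ be finitely supported with zero discrete momentum Δξ Σ_j ξ_j g⁰_j = 0, and let gⁿ be the sequence obtained after n steps of the scheme. Then for all n ≥ 0: (i) the discrete mass is conserved, Δξ Σ_j gⁿ_j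 = Δξ Σ_j g⁰_j, and (ii) the discrete momentum remains zero, Δξ Σ_j ξ_j gⁿ_j = 0. -/
/-- Grid points `ξ_j = (j − J)Δξ`. -/
noncomputable def mcuXi (Δξ : ℝ) (J : ℤ) (j : ℤ) : ℝ := ((j - J : ℤ) : ℝ) * Δξ

/-- Base upwind flux `F^{(0)}_{j+1/2}` for drift speed `c`. -/
noncomputable def mcuF0 (Δξ c : ℝ) (J : ℤ) (g : ℤ → ℝ) (j : ℤ) : ℝ :=
  if 0 < c then
    (if J ≤ j then c * mcuXi Δξ J j * g j else c * mcuXi Δξ J (j + 1) * g (j + 1))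
  else
    (if j ≤ J - 1 then c * mcuXi Δξ J j * g j else c * mcuXi Δξ J (j + 1) * g (j + 1))

/-- The momentum conservative upwind flux
`F^{(θ)}_{j+1/2} = F^{(0)}_{j+1/2} − (cθΔξ/2)(g_{j+1} − g_j)`. -/
noncomputable def mcuFlux (Δξ c θ : ℝ) (J : ℤ) (g : ℤ → ℝ) (j : ℤ) : ℝ :=
  mcuF0 Δξ c J g j - c * θ * Δξ / 2 * (g (j + 1) - g j)

/-- One step of the MCU(θ) finite-volume scheme:
`g'_j = g_j − (Δt/Δξ)(F^{(θ)}_{j+1/2} − F^{(θ)}_{j−1/2})`. -/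
noncomputable def mcuStep (Δξ Δt c θ : ℝ) (J : ℤ) (g : ℤ → ℝ) (j : ℤ) : ℝ :=
  g j - Δt / Δξ * (mcuFlux Δξ c θ J g j - mcuFlux Δξ c θ J g (j - 1))

/-- `n` steps of the MCU(θ) scheme starting from `g0`. -/
noncomputable def mcuIter (Δξ Δt c θ : ℝ) (J : ℤ) (g0 : ℤ → ℝ) : ℕ → ℤ → ℝ
  | 0 => g0
  | n + 1 => mcuStep Δξ Δt c θ J (mcuIter Δξ Δt c θ J g0 n)

open Function

private lemma mcu_comp_supp {g : ℤ → ℝ} (hg : (support g).Finite) (e : ℤ → ℤ)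
    (he : Function.Injective e) : (support fun j => g (e j)).Finite := by
  have h : (support fun j => g (e j)) = e ⁻¹' support g := rfl
  rw [h]
  exact hg.preimage he.injOn

private lemma mcu_finsum_shift (f : ℤ → ℝ) (k : ℤ) :
    ∑ᶠ j : ℤ, f (j + k) = ∑ᶠ j, f j := by
  simpa using finsum_comp_equiv (Equiv.addRight k) (f := f)

private lemma mcu_finsum_shift_sub (f : ℤ → ℝ) :
    ∑ᶠ j : ℤ, f (j - 1) = ∑ᶠ j, f j := by
  simpa using finsum_comp_equiv (Equiv.subRight (1 : ℤ)) (f := f)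

private lemma mcu_xi_J (Δξ : ℝ) (J : ℤ) : mcuXi Δξ J J = 0 := by simp [mcuXi]

private lemma mcuF0_supp (Δξ c : ℝ) (J : ℤ) {g : ℤ → ℝ} (hg : (support g).Finite) :
    (support (mcuF0 Δξ c J g)).Finite := by
  apply (hg.union (mcu_comp_supp hg (· + 1) (fun a b h => by simpa using h))).subset
  intro j hj
  by_contra hmem
  simp only [Set.mem_union, mem_support, not_or, not_not] at hmem
  apply hj
  unfold mcuF0
  split_ifs <;> simp [hmem.1, hmem.2]

private lemma mcuFlux_supp (Δξ c θ : ℝ) (J : ℤ) {g : ℤ → ℝ} (hg : (support g).Finite) :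
    (support (mcuFlux Δξ c θ J g)).Finite := by
  apply ((mcuF0_supp Δξ c J hg).union
    (hg.union (mcu_comp_supp hg (· + 1) (fun a b h => by simpa using h)))).subset
  intro j hj
  by_contra hmem
  simp only [Set.mem_union, mem_support, not_or, not_not] at hmem
  apply hj
  unfold mcuFlux
  simp only [hmem.1, hmem.2.1, hmem.2.2]
  ring

private lemma mcuStep_supp (Δξ Δt c θ : ℝ) (J : ℤ) {g : ℤ → ℝ} (hg : (support g).Finite) :
    (support (mcuStep Δξ Δt c θ J g)).Finite := by
  have hF := mcuFlux_supp Δξ c θ J hg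
  apply (hg.union (hF.union (mcu_comp_supp hF (· - 1) (fun a b h => by simpa using h)))).subset
  intro j hj
  by_contra hmem
  simp only [Set.mem_union, mem_support, not_or, not_not] at hmem
  apply hj
  unfold mcuStep
  simp only [hmem.1, hmem.2.1, hmem.2.2]
  ring

private lemma mcu_sum_F0 (Δξ c : ℝ) (J : ℤ) {g : ℤ → ℝ} (hg : (support g).Finite) :
    ∑ᶠ j, mcuF0 Δξ c J g j = c * ∑ᶠ j, mcuXi Δξ J j * g j := by
  classical
  set u : ℤ → ℝ := fun j => c * (mcuXi Δξ J j * g j) with hu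
  have hus : (support u).Finite := by
    apply hg.subset
    intro j hj
    simp only [mem_support, hu] at hj ⊢
    intro h; apply hj; simp only [h]; ring
  set P : ℤ → Prop := fun j => if 0 < c then J ≤ j else j ≤ J - 1 with hP
  set a : ℤ → ℝ := fun j => if P j then u j else 0 with ha
  set b : ℤ → ℝ := fun j => if P j then 0 else u (j + 1) with hb
  have hF0 : ∀ j, mcuF0 Δξ c J g j = a j + b j := by
    intro j
    simp only [ha, hb, hP, hu]
    unfold mcuF0
    split_ifs <;> ring
  have hsa : (support a).Finite := by
    apply hus.subset
    intro j hj
    simp only [mem_support, ha] at hj ⊢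
    intro h; apply hj; split_ifs <;> simp [h]
  have hub : (support fun j => u (j + 1)).Finite :=
    mcu_comp_supp hus (· + 1) (fun x y h => by simpa using h)
  have hsb : (support b).Finite := by
    apply hub.subset
    intro j hj
    simp only [mem_support, hb] at hj ⊢
    intro h; apply hj; split_ifs <;> simp [h]
  have hsb' : (support fun j => b (j - 1)).Finite :=
    mcu_comp_supp hsb (· - 1) (fun x y h => by simpa using h)
  have key : ∀ j, a j + b (j - 1) = u j := by
    intro j
    have hJ : u J = 0 := by simp [hu, mcu_xi_J]
    have hj1 : j - 1 + 1 = j := by omega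
    simp only [ha, hb, hP, hj1]
    split_ifs with hc h1 h2 h2 h1 h2 h2
    · ring
    · have : j = J := by omega
      subst this; rw [hJ]; ring
    · exfalso; omega
    · ring
    · ring
    · exfalso; omega
    · have : j = J := by omega
      subst this; rw [hJ]; ring
    · ring
  calc ∑ᶠ j, mcuF0 Δξ c J g j = ∑ᶠ j, (a j + b j) := by
        exact finsum_congr hF0
    _ = ∑ᶠ j, a j + ∑ᶠ j, b j := finsum_add_distrib hsa hsb
    _ = ∑ᶠ j, a j + ∑ᶠ j, b (j - 1) := by rw [mcu_finsum_shift_sub b]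
    _ = ∑ᶠ j, (a j + b (j - 1)) := (finsum_add_distrib hsa hsb').symm
    _ = ∑ᶠ j, u j := finsum_congr key
    _ = c * ∑ᶠ j, mcuXi Δξ J j * g j := (mul_finsum' _ c (by
        apply hg.subset
        intro j hj
        simp only [mem_support] at hj ⊢
        intro h; apply hj; simp only [h]; ring)).symm

private lemma mcu_sum_flux (Δξ c θ : ℝ) (J : ℤ) {g : ℤ → ℝ} (hg : (support g).Finite) :
    ∑ᶠ j, mcuFlux Δξ c θ J g j = c * ∑ᶠ j, mcuXi Δξ J j * g j := by
  have hF0 := mcuF0_supp Δξ c J hg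
  have hg1 : (support fun j => g (j + 1)).Finite :=
    mcu_comp_supp hg (· + 1) (fun x y h => by simpa using h)
  have hd : (support fun j => c * θ * Δξ / 2 * (g (j + 1) - g j)).Finite := by
    apply (hg1.union hg).subset
    intro j hj
    by_contra hmem
    simp only [Set.mem_union, mem_support, not_or, not_not] at hmem
    apply hj
    simp only [hmem.1, hmem.2]; ring
  unfold mcuFlux
  rw [finsum_sub_distrib hF0 hd, mcu_sum_F0 Δξ c J hg]
  have : ∑ᶠ j, c * θ * Δξ / 2 * (g (j + 1) - g j) = 0 := by
    rw [← mul_finsum' _ _ (by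
      apply (hg1.union hg).subset
      intro j hj
      by_contra hmem
      simp only [Set.mem_union, mem_support, not_or, not_not] at hmem
      apply hj
      simp only [mem_support, not_not]
      simp only [hmem.1, hmem.2]; ring)]
    rw [finsum_sub_distrib hg1 hg, mcu_finsum_shift g 1]
    ring
  rw [this]; ring

private lemma mcu_mass_step (Δξ Δt c θ : ℝ) (J : ℤ) {g : ℤ → ℝ}
    (hg : (support g).Finite) :
    ∑ᶠ j, mcuStep Δξ Δt c θ J g j = ∑ᶠ j, g j := by
  have hF := mcuFlux_supp Δξ c θ J hg
  have hFs : (support fun j => mcuFlux Δξ c θ J g (j - 1)).Finite :=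
    mcu_comp_supp hF (· - 1) (fun x y h => by simpa using h)
  have hsub : (support fun j => mcuFlux Δξ c θ J g j - mcuFlux Δξ c θ J g (j - 1)).Finite := by
    apply (hF.union hFs).subset
    intro j hj
    by_contra hmem
    simp only [Set.mem_union, mem_support, not_or, not_not] at hmem
    apply hj
    simp only [hmem.1, hmem.2]; ring
  have hd : (support fun j =>
      Δt / Δξ * (mcuFlux Δξ c θ J g j - mcuFlux Δξ c θ J g (j - 1))).Finite := by
    apply hsub.subset
    intro j hj
    simp only [mem_support] at hj ⊢
    intro h; apply hj; simp only [h]; ring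
  unfold mcuStep
  rw [finsum_sub_distrib hg hd, ← mul_finsum' _ _ hsub,
    finsum_sub_distrib hF hFs, mcu_finsum_shift_sub (mcuFlux Δξ c θ J g)]
  ring

private lemma mcu_mom_step (Δξ Δt c θ : ℝ) (hΔξ : Δξ ≠ 0) (J : ℤ) {g : ℤ → ℝ}
    (hg : (support g).Finite) :
    ∑ᶠ j, mcuXi Δξ J j * mcuStep Δξ Δt c θ J g j
      = (1 + c * Δt) * ∑ᶠ j, mcuXi Δξ J j * g j := by
  set F := mcuFlux Δξ c θ J g with hFdef
  set x := mcuXi Δξ J with hxdef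
  have hF : (support F).Finite := mcuFlux_supp Δξ c θ J hg
  have hxg : (support fun j => x j * g j).Finite := by
    apply hg.subset
    intro j hj
    simp only [mem_support] at hj ⊢
    intro h; apply hj; simp only [h]; ring
  have hxF : (support fun j => x j * F j).Finite := by
    apply hF.subset
    intro j hj
    simp only [mem_support] at hj ⊢
    intro h; apply hj; simp only [h]; ring
  have hxF1 : (support fun j => x (j + 1) * F j).Finite := by
    apply hF.subset
    intro j hj
    simp only [mem_support] at hj ⊢
    intro h; apply hj; simp only [h]; ring
  have hxFs : (support fun j => x j * F (j - 1)).Finite := by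
    apply (mcu_comp_supp hF (· - 1) (fun a b h => by simpa using h)).subset
    intro j hj
    simp only [mem_support] at hj ⊢
    intro h; apply hj; simp only [h]; ring
  have hrest : (support fun j => x j * (Δt / Δξ * (F j - F (j - 1)))).Finite := by
    apply (hxF.union hxFs).subset
    intro j hj
    by_contra hmem
    simp only [Set.mem_union, mem_support, not_or, not_not] at hmem
    apply hj
    have h1 : x j * F j = 0 := hmem.1
    have h2 : x j * F (j - 1) = 0 := hmem.2
    have : x j * (Δt / Δξ * (F j - F (j - 1)))
        = Δt / Δξ * (x j * F j - x j * F (j - 1)) := by ring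
    simp only []
    rw [this, h1, h2]; ring
  have hxdiff : ∀ j : ℤ, x j - x (j + 1) = -Δξ := by
    intro j
    simp only [hxdef, mcuXi]
    push_cast
    ring
  have hshift : ∑ᶠ j, x j * F (j - 1) = ∑ᶠ j, x (j + 1) * F j := by
    have := mcu_finsum_shift (fun j => x j * F (j - 1)) 1
    rw [← this]
    apply finsum_congr
    intro j
    have : j + 1 - 1 = j := by omega
    rw [this]
  have hcomb : (support fun j => x j * F j - x (j + 1) * F j).Finite := by
    apply (hxF.union hxF1).subset
    intro j hj
    by_contra hmem
    simp only [Set.mem_union, mem_support, not_or, not_not] at hmem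
    apply hj
    simp only [hmem.1, hmem.2]; ring
  have hsumF : ∑ᶠ j, F j = c * ∑ᶠ j, x j * g j := mcu_sum_flux Δξ c θ J hg
  have step_eq : ∀ j, x j * mcuStep Δξ Δt c θ J g j
      = x j * g j - x j * (Δt / Δξ * (F j - F (j - 1))) := by
    intro j; unfold mcuStep; rw [← hFdef]; ring
  calc ∑ᶠ j, x j * mcuStep Δξ Δt c θ J g j
      = ∑ᶠ j, (x j * g j - x j * (Δt / Δξ * (F j - F (j - 1)))) := finsum_congr step_eq
    _ = ∑ᶠ j, x j * g j - ∑ᶠ j, x j * (Δt / Δξ * (F j - F (j - 1))) :=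
        finsum_sub_distrib hxg hrest
    _ = ∑ᶠ j, x j * g j - Δt / Δξ * ∑ᶠ j, (x j * F j - x j * F (j - 1)) := by
        have hsub' : (support fun j => x j * F j - x j * F (j - 1)).Finite := by
          apply (hxF.union hxFs).subset
          intro j hj
          by_contra hmem
          simp only [Set.mem_union, mem_support, not_or, not_not] at hmem
          apply hj
          simp only [hmem.1, hmem.2]; ring
        have e1 : ∑ᶠ j, x j * (Δt / Δξ * (F j - F (j - 1)))
            = ∑ᶠ j, Δt / Δξ * (x j * F j - x j * F (j - 1)) :=
          finsum_congr (fun j => by ring)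
        rw [e1, ← mul_finsum' _ (Δt / Δξ) hsub']
    _ = ∑ᶠ j, x j * g j - Δt / Δξ * (∑ᶠ j, x j * F j - ∑ᶠ j, x j * F (j - 1)) := by
        rw [finsum_sub_distrib hxF hxFs]
    _ = ∑ᶠ j, x j * g j - Δt / Δξ * ∑ᶠ j, (x j * F j - x (j + 1) * F j) := by
        rw [hshift, finsum_sub_distrib hxF hxF1]
    _ = ∑ᶠ j, x j * g j - Δt / Δξ * ∑ᶠ j, (-Δξ) * F j := by
        congr 2
        apply finsum_congr
        intro j
        rw [show x j * F j - x (j + 1) * F j = (x j - x (j + 1)) * F j from by ring,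
          hxdiff j]
    _ = ∑ᶠ j, x j * g j - Δt / Δξ * ((-Δξ) * ∑ᶠ j, F j) := by
        rw [← mul_finsum' _ (-Δξ) hF]
    _ = ∑ᶠ j, x j * g j + Δt * ∑ᶠ j, F j := by
        field_simp
        ring
    _ = (1 + c * Δt) * ∑ᶠ j, x j * g j := by rw [hsumF]; ring

/-- Proposition 4.1 (general drift speed `c`): the MCU(θ) scheme conserves the
discrete mass and preserves the zero discrete momentum of the initial data. -/
theorem mcu_mass_and_zero_momentum_conservation
    (Δξ Δt : ℝ) (hΔξ : 0 < Δξ) (hΔt : 0 < Δt) (c : ℝ)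
    (θ : ℝ) (hθ : θ ∈ Set.Icc (-1 : ℝ) 1) (J : ℤ)
    (g0 : ℤ → ℝ) (hg0 : (Function.support g0).Finite)
    (hmom : Δξ * ∑' j : ℤ, mcuXi Δξ J j * g0 j = 0) :
    ∀ n : ℕ,
      (Δξ * ∑' j : ℤ, mcuIter Δξ Δt c θ J g0 n j = Δξ * ∑' j : ℤ, g0 j) ∧
      (Δξ * ∑' j : ℤ, mcuXi Δξ J j * mcuIter Δξ Δt c θ J g0 n j = 0) := by
  have hsupp : ∀ n, (support (mcuIter Δξ Δt c θ J g0 n)).Finite := by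
    intro n
    induction n with
    | zero => exact hg0
    | succ n ih => exact mcuStep_supp Δξ Δt c θ J ih
  have hxsupp : ∀ n, (support fun j => mcuXi Δξ J j * mcuIter Δξ Δt c θ J g0 n j).Finite := by
    intro n
    apply (hsupp n).subset
    intro j hj
    simp only [mem_support] at hj ⊢
    intro h; apply hj; simp only [h]; ring
  have hmom0 : ∑ᶠ j, mcuXi Δξ J j * g0 j = 0 := by
    have h1 : ∑' j : ℤ, mcuXi Δξ J j * g0 j = 0 := by
      rcases mul_eq_zero.mp hmom with h | h
      · exact absurd h hΔξ.ne'
      · exact h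
    have hxg0 : (support fun j => mcuXi Δξ J j * g0 j).Finite := hxsupp 0
    rw [← tsum_eq_finsum (L := SummationFilter.unconditional ℤ) hxg0]
    exact h1
  have key : ∀ n, (∑ᶠ j, mcuIter Δξ Δt c θ J g0 n j = ∑ᶠ j, g0 j) ∧
      (∑ᶠ j, mcuXi Δξ J j * mcuIter Δξ Δt c θ J g0 n j = 0) := by
    intro n
    induction n with
    | zero => exact ⟨rfl, hmom0⟩
    | succ n ih =>
      constructor
      · rw [show mcuIter Δξ Δt c θ J g0 (n + 1) = mcuStep Δξ Δt c θ J (mcuIter Δξ Δt c θ J g0 n)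
          from rfl, mcu_mass_step Δξ Δt c θ J (hsupp n)]
        exact ih.1
      · rw [show mcuIter Δξ Δt c θ J g0 (n + 1) = mcuStep Δξ Δt c θ J (mcuIter Δξ Δt c θ J g0 n)
          from rfl, mcu_mom_step Δξ Δt c θ hΔξ.ne' J (hsupp n), ih.2]
        ring
  intro n
  constructor
  · rw [tsum_eq_finsum (hsupp n), tsum_eq_finsum hg0, (key n).1]
  · rw [tsum_eq_finsum (hxsupp n), (key n).2, mul_zero]
end

section
/- Fix Δx > 0, Δξ > 0, ω > 0, J ∈ ℤ, set ξ_j = (j−J)Δξ for j ∈ ℤ (so ξ_J = 0), and let g : ℤ × ℤ → ℝ, (i,j) ↦ g_{ij}, be finitely supported in j for each i. Fix i ∈ ℤ, define ρ_i := Δξ Σ_j g_{ij} and assume ρ_i ≠ 0 (and similarly ρ_{i±1} relevant entries are finite sums). Define the fluxes F²_{i+1/2,j} := (ξ_j/ω) g_{ij} for j ≥ J and (ξ_j/ω) g_{i+1,j} for j ≤ J−1; the discrete pressure gradient (∂_xP)_i := Δξ [ Σ_{j ≥ J+1} ξ_j² (g_{ij} − g_{i−1,j})/Δx + Σ_{j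 ≤ J−1} ξ_j² (g_{i+1,j} − g_{ij})/Δx ]; and F⁴_{i,j+1/2} := (1/(ρ_i ω)) (∂_xP)_i g_{ij} if (∂_xP)_i ≥ 0 and (1/(ρ_i ω)) (∂_xP)_i g_{i,j+1} if (∂_xP)_i < 0. Then the combined discrete momentum contribution vanishes: Σ_j ξ_j [ (F²_{i+1/2,j} − F²_{i−1/2,j})/Δx + (F⁴_{i,j+1/2} − F⁴_{i,j−1/2})/Δξ ] = 0. -/
/-- Discrete cancellation of the momentum contributions of the fluxes `F²`
(upwind flux for `∂_x((ξ/ω)g)`) and `F⁴` (upwind flux for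
`∂_ξ((∂_xP/(ρω))g)`) in the finite-volume discretization of the rescaled
Motsch–Tadmor equation:
`Σ_j ξ_j [ (F²_{i+1/2,j} − F²_{i−1/2,j})/Δx + (F⁴_{i,j+1/2} − F⁴_{i,j−1/2})/Δξ ] = 0`. -/
theorem motsch_tadmor_discrete_momentum_cancellation
    (Δx Δξ ω : ℝ) (hΔx : 0 < Δx) (hΔξ : 0 < Δξ) (hω : 0 < ω) (J : ℤ)
    (g : ℤ → ℤ → ℝ) (hg : ∀ i : ℤ, (Function.support (g i)).Finite)
    (ξ : ℤ → ℝ) (hξ : ∀ j, ξ j = ((j - J : ℤ) : ℝ) * Δξ)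
    (i : ℤ)
    (ρ : ℤ → ℝ) (hρ : ∀ i', ρ i' = Δξ * ∑' j : ℤ, g i' j) (hρi : ρ i ≠ 0)
    (F2 : ℤ → ℤ → ℝ)
    (hF2 : ∀ i' j, F2 i' j
      = if J ≤ j then ξ j / ω * g i' j else ξ j / ω * g (i' + 1) j)
    (dP : ℤ → ℝ)
    (hdP : ∀ i', dP i'
      = Δξ * ((∑' j : ℤ, if J + 1 ≤ j then ξ j ^ 2 * (g i' j - g (i' - 1) j) / Δx else 0)
          + ∑' j : ℤ, if j ≤ J - 1 then ξ j ^ 2 * (g (i' + 1) j - g i' j) / Δx else 0))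
    (F4 : ℤ → ℤ → ℝ)
    (hF4 : ∀ i' j, F4 i' j
      = if 0 ≤ dP i' then 1 / (ρ i' * ω) * dP i' * g i' j
        else 1 / (ρ i' * ω) * dP i' * g i' (j + 1)) :
    (∑' j : ℤ, ξ j * ((F2 i j - F2 (i - 1) j) / Δx + (F4 i j - F4 i (j - 1)) / Δξ)) = 0 := by
  have hωn : ω ≠ 0 := hω.ne'
  have hΔξn : Δξ ≠ 0 := hΔξ.ne'
  have hΔxn : Δx ≠ 0 := hΔx.ne'
  -- support finsets
  set sA := (hg (i - 1)).toFinset with hsA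
  set sB := (hg i).toFinset with hsB
  set sC := (hg (i + 1)).toFinset with hsC
  have memA : ∀ j, j ∉ sA → g (i - 1) j = 0 := fun j hj => by
    by_contra h; exact hj ((hg (i - 1)).mem_toFinset.mpr h)
  have memB : ∀ j, j ∉ sB → g i j = 0 := fun j hj => by
    by_contra h; exact hj ((hg i).mem_toFinset.mpr h)
  have memC : ∀ j, j ∉ sC → g (i + 1) j = 0 := fun j hj => by
    by_contra h; exact hj ((hg (i + 1)).mem_toFinset.mpr h)
  -- zero lemma for F4-type sums
  set tB : Finset ℤ := sB ∪ sB.image (· + 1) ∪ sB.image (· - 1) with htB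
  have hzero : ∀ j ∉ tB, g i (j - 1) = 0 ∧ g i j = 0 ∧ g i (j + 1) = 0 := by
    intro j hj
    refine ⟨?_, ?_, ?_⟩
    · by_contra h
      exact hj (by
        apply Finset.mem_union_left
        apply Finset.mem_union_right
        exact Finset.mem_image.mpr ⟨j - 1, (hg i).mem_toFinset.mpr h, by ring⟩)
    · by_contra h
      exact hj (Finset.mem_union_left _ (Finset.mem_union_left _ ((hg i).mem_toFinset.mpr h)))
    · by_contra h
      exact hj (by
        apply Finset.mem_union_right
        exact Finset.mem_image.mpr ⟨j + 1, (hg i).mem_toFinset.mpr h, by ring⟩)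
  have key : ∀ f : ℤ → ℝ,
      (∀ j, g i (j - 1) = 0 → g i j = 0 → g i (j + 1) = 0 → f j = 0) → Summable f := by
    intro f hf
    refine summable_of_ne_finset_zero (s := tB) fun j hj => ?_
    obtain ⟨h1, h2, h3⟩ := hzero j hj
    exact hf j h1 h2 h3
  -- the two pressure-gradient summands
  set f1 : ℤ → ℝ := fun j => if J + 1 ≤ j then ξ j ^ 2 * (g i j - g (i - 1) j) / Δx else 0
    with hf1
  set f2 : ℤ → ℝ := fun j => if j ≤ J - 1 then ξ j ^ 2 * (g (i + 1) j - g i j) / Δx else 0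
    with hf2
  have Sf1 : Summable f1 := by
    refine summable_of_ne_finset_zero (s := sA ∪ sB) fun j hj => ?_
    have h1 := memA j (fun h => hj (Finset.mem_union_left _ h))
    have h2 := memB j (fun h => hj (Finset.mem_union_right _ h))
    simp [hf1, h1, h2]
  have Sf2 : Summable f2 := by
    refine summable_of_ne_finset_zero (s := sB ∪ sC) fun j hj => ?_
    have h2 := memB j (fun h => hj (Finset.mem_union_left _ h))
    have h3 := memC j (fun h => hj (Finset.mem_union_right _ h))
    simp [hf2, h2, h3]
  -- summabilities related to F4 and g i
  have Sg : Summable (g i) := by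
    refine key (g i) fun j _ h2 _ => h2
  have SF4 : Summable (F4 i) := by
    refine key _ fun j _ h2 h3 => ?_
    rw [hF4]; split <;> simp [h2, h3]
  have SB' : Summable (fun j => ξ j * F4 i j) := by
    refine key _ fun j _ h2 h3 => ?_
    rw [hF4]; split <;> simp [h2, h3]
  have SC2 : Summable (fun j => ξ (j + 1) * F4 i j) := by
    refine key _ fun j _ h2 h3 => ?_
    rw [hF4]; split <;> simp [h2, h3]
  have SC' : Summable (fun j => ξ j * F4 i (j - 1)) := by
    refine key _ fun j h1 h2 _ => ?_
    rw [hF4]; split <;> simp [h1, h2]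
  -- sum of g i
  have hgsum : (∑' j : ℤ, g i j) = ρ i / Δξ := by
    rw [hρ i]; field_simp
  have hgshift : (∑' j : ℤ, g i (j + 1)) = ∑' j : ℤ, g i j := by
    simpa using (Equiv.addRight (1 : ℤ)).tsum_eq (g i)
  -- sum of F4
  have hF4sum : (∑' j : ℤ, F4 i j) = dP i / (ω * Δξ) := by
    rcases le_or_gt 0 (dP i) with h | h
    · have : ∀ j : ℤ, F4 i j = (1 / (ρ i * ω) * dP i) * g i j := fun j => by
        rw [hF4, if_pos h]
      rw [tsum_congr this, tsum_mul_left, hgsum]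
      field_simp
    · have : ∀ j : ℤ, F4 i j = (1 / (ρ i * ω) * dP i) * g i (j + 1) := fun j => by
        rw [hF4, if_neg (not_le.mpr h)]
      rw [tsum_congr this, tsum_mul_left, hgshift, hgsum]
      field_simp
  -- pointwise identity for the F2 part
  have hu : ∀ j : ℤ, ξ j * ((F2 i j - F2 (i - 1) j) / Δx) = (f1 j + f2 j) / ω := by
    intro j
    have hii : i - 1 + 1 = i := by ring
    rw [hF2 i j, hF2 (i - 1) j, hii]
    rcases lt_trichotomy j J with hj | hj | hj
    · have h1 : ¬ J ≤ j := not_le.mpr hj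
      have h2 : ¬ J + 1 ≤ j := by omega
      have h3 : j ≤ J - 1 := by omega
      simp only [hf1, hf2, if_neg h1, if_neg h2, if_pos h3]
      field_simp
      ring
    · have hξ0 : ξ j = 0 := by rw [hξ, hj]; simp
      have h1 : J ≤ j := hj.ge
      have h2 : ¬ J + 1 ≤ j := by omega
      have h3 : ¬ j ≤ J - 1 := by omega
      simp only [hf1, hf2, if_pos h1, if_neg h2, if_neg h3, hξ0]
      simp
    · have h1 : J ≤ j := hj.le
      have h2 : J + 1 ≤ j := by omega
      have h3 : ¬ j ≤ J - 1 := by omega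
      simp only [hf1, hf2, if_pos h1, if_pos h2, if_neg h3]
      field_simp
      ring
  -- split the main sum
  have hsplit : ∀ j : ℤ,
      ξ j * ((F2 i j - F2 (i - 1) j) / Δx + (F4 i j - F4 i (j - 1)) / Δξ)
        = (f1 j + f2 j) / ω + (ξ j * F4 i j - ξ j * F4 i (j - 1)) / Δξ := by
    intro j
    rw [← hu j]
    ring
  rw [tsum_congr hsplit]
  have S1 : Summable (fun j => (f1 j + f2 j) / ω) := (Sf1.add Sf2).div_const ω
  have S2 : Summable (fun j => (ξ j * F4 i j - ξ j * F4 i (j - 1)) / Δξ) :=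
    (SB'.sub SC').div_const Δξ
  rw [Summable.tsum_add S1 S2]
  -- first sum
  have hA : (∑' j : ℤ, (f1 j + f2 j) / ω) = dP i / Δξ / ω := by
    rw [tsum_div_const, Summable.tsum_add Sf1 Sf2]
    have := hdP i
    rw [this]
    field_simp
    rfl
  -- second sum
  have hreindex : (∑' j : ℤ, ξ j * F4 i (j - 1)) = ∑' j : ℤ, ξ (j + 1) * F4 i j := by
    have := (Equiv.addRight (1 : ℤ)).tsum_eq (fun j => ξ j * F4 i (j - 1))
    simpa using this.symm
  have hξdiff : ∀ j : ℤ, ξ j - ξ (j + 1) = -Δξ := by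
    intro j; rw [hξ, hξ]; push_cast; ring
  have hB : (∑' j : ℤ, (ξ j * F4 i j - ξ j * F4 i (j - 1)) / Δξ) = -(dP i / Δξ / ω) := by
    rw [tsum_div_const, Summable.tsum_sub SB' SC', hreindex, ← Summable.tsum_sub SB' SC2]
    have : ∀ j : ℤ, ξ j * F4 i j - ξ (j + 1) * F4 i j = -Δξ * F4 i j := by
      intro j
      rw [← sub_mul, hξdiff j]
    rw [tsum_congr this, tsum_mul_left, hF4sum]
    field_simp
  rw [hA, hB]
  ring
end

section
/- Let g : ℝ × ℝ → ℝ, (x,ξ) ↦ g(x,ξ), be smooth (C¹) and compactly supported in ξ, locally uniformly in x, let ω : ℝ → (0,∞) be smooth, and define ρ(x) := ∫ g(x,ξ) dξ and P(x) := ∫ ξ² g(x,ξ) dξ, with ρ(x) > 0 for all x. Define the remainder R(x,ξ) := (ω(x)²/ρ(x)) (P/ω²)'(x) ∂_ξ g(x,ξ) + ξ [ (ω'(x)/ω(x)) ∂_ξ( ξ g(x,ξ) ) + ∂_x g(x,ξ) ]. Then for every x ∈ ℝ: ∫ ξ R(x,ξ) dξ = 0. -/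
open MeasureTheory

/-- The integral over `ℝ` of the derivative of a `C¹` compactly supported function vanishes. -/
lemma integral_deriv_eq_zero_of_compactSupport (f : ℝ → ℝ)
    (hf : ContDiff ℝ 1 f) (h2f : HasCompactSupport f) :
    (∫ ξ, deriv f ξ) = 0 := by
  have hint : Integrable (deriv f) :=
    (hf.continuous_deriv le_rfl).integrable_of_hasCompactSupport h2f.deriv
  rw [← intervalIntegral.integral_Iic_add_Ioi (b := (0:ℝ)) hint.integrableOn hint.integrableOn,
    HasCompactSupport.integral_Iic_deriv_eq hf h2f 0,
    HasCompactSupport.integral_Ioi_deriv_eq hf h2f 0]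
  ring

/-- The remainder term `R` of the rescaled flocking equation has vanishing first
moment in `ξ`: with density `ρ = ∫ g dξ`, pressure `P = ∫ ξ² g dξ` and
`R = (ω²/ρ)(P/ω²)' ∂_ξ g + ξ[(ω'/ω) ∂_ξ(ξg) + ∂_x g]`, one has `∫ ξ R dξ = 0`. -/
theorem rescaled_remainder_zero_first_moment
    (g : ℝ → ℝ → ℝ)
    (hg : ContDiff ℝ 1 (fun p : ℝ × ℝ => g p.1 p.2))
    (hsupp : ∀ L : Set ℝ, IsCompact L → ∃ K : Set ℝ, IsCompact K ∧
      ∀ x ∈ L, ∀ ξ, ξ ∉ K → g x ξ = 0)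
    (ω : ℝ → ℝ) (hωsm : ContDiff ℝ (⊤ : ℕ∞) ω) (hωpos : ∀ x, 0 < ω x)
    (ρ P : ℝ → ℝ)
    (hρ : ∀ x, ρ x = ∫ ξ, g x ξ) (hP : ∀ x, P x = ∫ ξ, ξ ^ 2 * g x ξ)
    (hρpos : ∀ x, 0 < ρ x)
    (R : ℝ → ℝ → ℝ)
    (hR : ∀ x ξ, R x ξ
      = ω x ^ 2 / ρ x * deriv (fun y => P y / ω y ^ 2) x * deriv (fun η => g x η) ξ
        + ξ * (deriv ω x / ω x * deriv (fun η => η * g x η) ξ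
          + deriv (fun y => g y ξ) x)) :
    ∀ x : ℝ, (∫ ξ, ξ * R x ξ) = 0 := by
  intro x
  set G : ℝ × ℝ → ℝ := fun p => g p.1 p.2 with hG
  -- compact support in ξ, locally uniformly around x
  obtain ⟨K, hKc, hK0⟩ := hsupp (Set.Icc (x - 1) (x + 1)) isCompact_Icc
  obtain ⟨M, hKM⟩ := hKc.isBounded.subset_closedBall (0 : ℝ)
  set B : Set ℝ := Metric.closedBall (0 : ℝ) M with hBdef
  have hBc : IsCompact B := isCompact_closedBall _ _
  have hxL : ∀ y : ℝ, |y - x| ≤ 1 → y ∈ Set.Icc (x - 1) (x + 1) := by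
    intro y hy
    rw [abs_le] at hy
    constructor <;> linarith [hy.1, hy.2]
  have hzero : ∀ y : ℝ, |y - x| ≤ 1 → ∀ ξ, ξ ∉ B → g y ξ = 0 := by
    intro y hy ξ hξ
    exact hK0 y (hxL y hy) ξ (fun h => hξ (hKM h))
  -- the partial derivatives via fderiv
  have hgd : Differentiable ℝ G := hg.differentiable one_ne_zero
  have hfderiv_cont : Continuous (fderiv ℝ G) := hg.continuous_fderiv one_ne_zero
  set px : ℝ → ℝ → ℝ := fun y ξ => fderiv ℝ G (y, ξ) (1, 0) with hpx
  have hpx_deriv : ∀ y ξ : ℝ, HasDerivAt (fun t => g t ξ) (px y ξ) y := by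
    intro y ξ
    have h1 : HasDerivAt (fun t : ℝ => (t, ξ)) ((1 : ℝ), (0 : ℝ)) y :=
      (hasDerivAt_id y).prodMk (hasDerivAt_const y ξ)
    exact (hgd (y, ξ)).hasFDerivAt.comp_hasDerivAt y h1
  have hpx_cont : Continuous fun ξ => px x ξ := by
    have : Continuous fun ξ : ℝ => fderiv ℝ G (x, ξ) :=
      hfderiv_cont.comp (continuous_const.prodMk continuous_id)
    exact this.clm_apply continuous_const
  -- slice in ξ at x
  have hgx : ContDiff ℝ 1 (fun η => g x η) :=
    hg.comp (contDiff_const.prodMk contDiff_id)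
  have hcs : HasCompactSupport (fun η => g x η) := by
    apply HasCompactSupport.intro hBc
    intro ξ hξ
    exact hzero x (by simp) ξ hξ
  set d1 : ℝ → ℝ := fun ξ => deriv (fun η => g x η) ξ with hd1
  set d2 : ℝ → ℝ := fun ξ => deriv (fun η => η * g x η) ξ with hd2
  have hgx2 : ContDiff ℝ 1 (fun η => η * g x η) := contDiff_id.mul hgx
  have hcs2 : HasCompactSupport (fun η => η * g x η) := by
    apply HasCompactSupport.intro hBc
    intro ξ hξ
    simp [hzero x (by simp) ξ hξ]
  -- basic integrability
  have Ig : Integrable (fun ξ => g x ξ) := hgx.continuous.integrable_of_hasCompactSupport hcs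
  have Iξ2g : Integrable (fun ξ => ξ ^ 2 * g x ξ) :=
    ((continuous_id.pow 2).mul hgx.continuous).integrable_of_hasCompactSupport
      (by
        apply HasCompactSupport.intro hBc
        intro ξ hξ; simp [hzero x (by simp) ξ hξ])
  have Iξd1 : Integrable (fun ξ => ξ * d1 ξ) :=
    (continuous_id.mul (hgx.continuous_deriv le_rfl)).integrable_of_hasCompactSupport
      (by
        apply HasCompactSupport.intro (hcs.deriv.isCompact)
        intro ξ hξ
        have : deriv (fun η => g x η) ξ = 0 := by
          by_contra h
          exact hξ (subset_tsupport _ h)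
        simp [d1, this])
  have Iξ2d2 : Integrable (fun ξ => ξ ^ 2 * d2 ξ) :=
    ((continuous_id.pow 2).mul (hgx2.continuous_deriv le_rfl)).integrable_of_hasCompactSupport
      (by
        apply HasCompactSupport.intro (hcs2.deriv.isCompact)
        intro ξ hξ
        have : deriv (fun η => η * g x η) ξ = 0 := by
          by_contra h
          exact hξ (subset_tsupport _ h)
        simp [d2, this])
  -- px x · vanishes outside B
  have hpx_zero : ∀ y : ℝ, |y - x| < 1 → ∀ ξ, ξ ∉ B → px y ξ = 0 := by
    intro y hy ξ hξ
    have hz : (fun t => g t ξ) =ᶠ[nhds y] (fun _ => (0 : ℝ)) := by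
      have : Metric.ball x 1 ∈ nhds y := by
        apply Metric.isOpen_ball.mem_nhds
        simpa [Metric.mem_ball, Real.dist_eq] using hy
      filter_upwards [this] with t ht
      exact hzero t (le_of_lt (by simpa [Metric.mem_ball, Real.dist_eq] using ht)) ξ hξ
    have h1 : deriv (fun t => g t ξ) y = deriv (fun _ : ℝ => (0 : ℝ)) y :=
      Filter.EventuallyEq.deriv_eq hz
    have h2 : deriv (fun t => g t ξ) y = px y ξ := (hpx_deriv y ξ).deriv
    simp [← h2, h1]
  have Iξ2px : Integrable (fun ξ => ξ ^ 2 * px x ξ) :=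
    ((continuous_id.pow 2).mul hpx_cont).integrable_of_hasCompactSupport
      (by
        apply HasCompactSupport.intro hBc
        intro ξ hξ
        simp [hpx_zero x (by simp) ξ hξ])
  -- Step 1: ∫ ξ d1 = -ρ x
  have E1 : (∫ ξ, ξ * d1 ξ) = -ρ x := by
    have hf : ContDiff ℝ 1 (fun ξ => ξ * g x ξ) := contDiff_id.mul hgx
    have hderiv : ∀ ξ : ℝ, deriv (fun η => η * g x η) ξ = g x ξ + ξ * d1 ξ := by
      intro ξ
      have h1 : HasDerivAt (fun η => η * g x η) (1 * g x ξ + ξ * d1 ξ) ξ :=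
        (hasDerivAt_id ξ).mul (hgx.differentiable one_ne_zero ξ).hasDerivAt
      rw [h1.deriv]; ring
    have h0 : (∫ ξ, deriv (fun η => η * g x η) ξ) = 0 :=
      integral_deriv_eq_zero_of_compactSupport _ hf hcs2
    rw [show (fun ξ => deriv (fun η => η * g x η) ξ) = fun ξ => g x ξ + ξ * d1 ξ from
      funext hderiv] at h0
    rw [integral_add Ig Iξd1] at h0
    rw [hρ x]; linarith [h0]
  -- Step 2: ∫ ξ² d2 = -2 P x
  have E2 : (∫ ξ, ξ ^ 2 * d2 ξ) = -2 * P x := by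
    have hf : ContDiff ℝ 1 (fun ξ => ξ ^ 2 * (ξ * g x ξ)) :=
      (contDiff_id.pow 2).mul (contDiff_id.mul hgx)
    have hfc : HasCompactSupport (fun ξ => ξ ^ 2 * (ξ * g x ξ)) := by
      apply HasCompactSupport.intro hBc
      intro ξ hξ; simp [hzero x (by simp) ξ hξ]
    have hderiv : ∀ ξ : ℝ, deriv (fun η => η ^ 2 * (η * g x η)) ξ
        = 2 * (ξ ^ 2 * g x ξ) + ξ ^ 2 * d2 ξ := by
      intro ξ
      have h2 : HasDerivAt (fun η : ℝ => η ^ 2) (2 * ξ) ξ := by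
        simpa using (hasDerivAt_pow 2 ξ)
      have h3 : HasDerivAt (fun η => η * g x η) (d2 ξ) ξ :=
        (hgx2.differentiable one_ne_zero ξ).hasDerivAt
      have h4 : HasDerivAt (fun η => η ^ 2 * (η * g x η))
          (2 * ξ * (ξ * g x ξ) + ξ ^ 2 * d2 ξ) ξ := h2.mul h3
      rw [h4.deriv]; ring
    have h0 : (∫ ξ, deriv (fun η => η ^ 2 * (η * g x η)) ξ) = 0 :=
      integral_deriv_eq_zero_of_compactSupport _ hf hfc
    rw [show (fun ξ => deriv (fun η => η ^ 2 * (η * g x η)) ξ)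
        = fun ξ => 2 * (ξ ^ 2 * g x ξ) + ξ ^ 2 * d2 ξ from funext hderiv] at h0
    rw [integral_add (Iξ2g.const_mul 2) Iξ2d2, integral_const_mul, ← hP x] at h0
    linarith [h0]
  -- Step 3: differentiation under the integral sign for P
  have hP' : HasDerivAt P (∫ ξ, ξ ^ 2 * px x ξ) x := by
    have hPfun : P = fun y => ∫ ξ, ξ ^ 2 * g y ξ := funext hP
    rw [hPfun]
    -- bound on compact set
    have hcontF : Continuous fun p : ℝ × ℝ => p.2 ^ 2 * px p.1 p.2 := by
      have h1 : Continuous fun p : ℝ × ℝ => fderiv ℝ G (p.1, p.2) ((1:ℝ), (0:ℝ)) :=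
        (hfderiv_cont.comp (continuous_fst.prodMk continuous_snd)).clm_apply continuous_const
      exact (continuous_snd.pow 2).mul h1
    obtain ⟨C, hC⟩ := (isCompact_Icc.prod hBc).exists_bound_of_continuousOn
      (f := fun p : ℝ × ℝ => p.2 ^ 2 * px p.1 p.2) hcontF.continuousOn
    refine (hasDerivAt_integral_of_dominated_loc_of_deriv_le
      (F := fun y ξ => ξ ^ 2 * g y ξ) (F' := fun y ξ => ξ ^ 2 * px y ξ)
      (bound := B.indicator fun _ => C) (s := Metric.ball x (1/2)) (Metric.ball_mem_nhds x (by norm_num)) ?_ ?_ ?_ ?_ ?_ ?_).2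
    · filter_upwards with y
      exact ((continuous_id.pow 2).mul
        (hg.continuous.comp (continuous_const.prodMk continuous_id))).aestronglyMeasurable
    · exact Iξ2g
    · exact ((continuous_id.pow 2).mul hpx_cont).aestronglyMeasurable
    · filter_upwards with ξ
      intro y hy
      have hyx : |y - x| < 1 := by
        have := Metric.mem_ball.mp hy
        rw [Real.dist_eq] at this; linarith
      by_cases hξ : ξ ∈ B
      · rw [Set.indicator_of_mem hξ]
        exact hC (y, ξ) ⟨hxL y hyx.le, hξ⟩
      · rw [Set.indicator_of_notMem hξ]
        simp [hpx_zero y hyx ξ hξ]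
    · exact (integrableOn_const hBc.measure_lt_top.ne).integrable_indicator hBc.measurableSet
    · filter_upwards with ξ
      intro y hy
      exact (hpx_deriv y ξ).const_mul (ξ ^ 2)
  -- the ∂_x-derivative appearing in R coincides with px x
  have hdx : ∀ ξ : ℝ, deriv (fun y => g y ξ) x = px x ξ := fun ξ => (hpx_deriv x ξ).deriv
  -- value of deriv (P/ω²) at x
  set P' : ℝ := ∫ ξ, ξ ^ 2 * px x ξ with hP'v
  have hω' : HasDerivAt ω (deriv ω x) x := (hωsm.differentiable (by simp) x).hasDerivAt
  have hωne : ω x ≠ 0 := (hωpos x).ne'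
  have hω2 : HasDerivAt (fun y => ω y ^ 2) (2 * ω x * deriv ω x) x := by
    simpa [mul_comm, mul_assoc] using hω'.fun_pow 2
  have hDiv : HasDerivAt (fun y => P y / ω y ^ 2)
      ((P' * ω x ^ 2 - P x * (2 * ω x * deriv ω x)) / (ω x ^ 2) ^ 2) x :=
    hP'.div hω2 (pow_ne_zero 2 hωne)
  have hD : deriv (fun y => P y / ω y ^ 2) x
      = (P' * ω x ^ 2 - P x * (2 * ω x * deriv ω x)) / (ω x ^ 2) ^ 2 := hDiv.deriv
  -- assemble
  set A : ℝ := ω x ^ 2 / ρ x * deriv (fun y => P y / ω y ^ 2) x with hA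
  set Bc : ℝ := deriv ω x / ω x with hBc'
  have hsplit : (fun ξ => ξ * R x ξ)
      = fun ξ => A * (ξ * d1 ξ) + (Bc * (ξ ^ 2 * d2 ξ) + ξ ^ 2 * px x ξ) := by
    funext ξ
    rw [hR x ξ, hdx ξ]
    simp only [hA, hBc', hd1, hd2]
    ring
  have IG2 : Integrable (fun ξ => Bc * (ξ ^ 2 * d2 ξ) + ξ ^ 2 * px x ξ) volume :=
    (Iξ2d2.const_mul Bc).add Iξ2px
  rw [hsplit, integral_add (Iξd1.const_mul A) IG2,
    integral_add (Iξ2d2.const_mul Bc) Iξ2px,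
    integral_const_mul, integral_const_mul, E1, E2, ← hP'v]
  rw [hA, hD, hBc']
  have hρne : ρ x ≠ 0 := (hρpos x).ne'
  field_simp
  ring
end
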